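/- arXiv:0807.4802 — 3 statements merged into one kernel-verified Lean document; each statement's English description precedes it below -/
import Mathlib

section
/- Let K be a field, let S ⊆ ℕ² be a nonempty finite set with convex hull P = conv(S) ⊆ ℝ², let d ≥ 1 be an integer, and enumerate the lattice points of P as P ∩ ℤ² = {(a₀,b₀), …, (a_m,b_m)}. If f ∈ K[s,t] is a polynomial whose support is contained in d•P (i.e., every exponent vector (α,β) with nonzero coefficient in f lies in d•P = {d·p : p ∈ P}), then there exists a homogeneous polynomial g ∈ K[X₀, …, X_m] of degree d such that f(s,t) = g(s^{a₀} t^{b₀}, …, s^{a_m} t^{b_m}). -/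
/-!
Every lattice point of `d • P` is a sum of `d` lattice points of `P` (lattice polygons have the
integer decomposition property). Writing each exponent `α` of `f` as such a sum
`e k₁ + ⋯ + e k_d` exhibits the monomial `s^α` as the image of `X k₁ ⋯ X k_d`.

The decomposition property is proved by induction on the number of lattice points. By
Carathéodory a point of `P` lies in a simplex `T` spanned by lattice points of `P`. If `T`
contains a further lattice point `w`, coning `T` off from `w` gives a piece with fewer lattice
points. Otherwise `T` is an empty simplex, and the barycentric coordinates of a lattice point of
`d • T` are integers: else their fractional parts, or for a triangle their complements
`1 - fract`, would be the barycentric coordinates of a lattice point of `T` that is not a vertex.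
This is where dimension two enters.
-/

open Pointwise MvPolynomial

section ConvexGeometry

variable {E : Type*} [AddCommGroup E] [Module ℝ E]

theorem AffineIndependent.eq_of_finset_sum_eq_sum {T : Finset E}
    (hT : AffineIndependent ℝ ((↑) : T → E)) {a b : E → ℝ}
    (hsum : ∑ u ∈ T, a u = ∑ u ∈ T, b u) (hsmul : ∑ u ∈ T, a u • u = ∑ u ∈ T, b u • u) :
    ∀ u ∈ T, a u = b u := fun u hu =>
  hT.eq_of_sum_eq_sum (s := Finset.univ) (w₁ := fun i : T => a i) (w₂ := fun i : T => b i)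
    (by rwa [Finset.sum_coe_sort T a, Finset.sum_coe_sort T b])
    (by rwa [Finset.sum_coe_sort T fun u => a u • u, Finset.sum_coe_sort T fun u => b u • u])
    ⟨u, hu⟩ (Finset.mem_univ _)

theorem AffineIndependent.mem_extremePoints_convexHull {T : Finset E}
    (hT : AffineIndependent ℝ ((↑) : T → E)) {v : E} (hv : v ∈ T) :
    v ∈ (convexHull ℝ (T : Set E)).extremePoints ℝ := by
  classical
  refine mem_extremePoints_iff_left.2 ⟨subset_convexHull ℝ _ hv, ?_⟩
  rintro x₁ hx₁ x₂ hx₂ ⟨s, r, hs, hr, hsr, hv_eq⟩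
  obtain ⟨a, ha0, ha1, rfl⟩ := Finset.mem_convexHull'.1 hx₁
  obtain ⟨b, hb0, hb1, rfl⟩ := Finset.mem_convexHull'.1 hx₂
  have hδ := hT.eq_of_finset_sum_eq_sum (a := fun u => s * a u + r * b u)
    (b := fun u => if u = v then 1 else 0)
    (by simp [Finset.sum_add_distrib, ← Finset.mul_sum, ha1, hb1, hsr, hv])
    (by simp [add_smul, mul_smul, Finset.sum_add_distrib, ← Finset.smul_sum, hv_eq, hv])
  have ha : ∀ u ∈ T, u ≠ v → a u = 0 := fun u hu huv => by
    have h := hδ u hu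
    simp only [if_neg huv] at h
    nlinarith [ha0 u hu, hb0 u hu, mul_nonneg hr.le (hb0 u hu)]
  have hav : a v = 1 := by
    rwa [Finset.sum_eq_single_of_mem v hv ha] at ha1
  rw [Finset.sum_eq_single_of_mem v hv fun u hu huv => by rw [ha u hu huv, zero_smul], hav,
    one_smul]

theorem Finset.exists_mem_convexHull_insert_erase [DecidableEq E] {T : Finset E} {w x : E}
    (hw : w ∈ convexHull ℝ (T : Set E)) (hx : x ∈ convexHull ℝ (T : Set E)) :
    ∃ v ∈ T, x ∈ convexHull ℝ ((insert w (T.erase v) : Finset E) : Set E) := by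
  obtain ⟨lam, hl0, hl1, rfl⟩ := Finset.mem_convexHull'.1 hx
  obtain ⟨mu, hm0, hm1, hmw⟩ := Finset.mem_convexHull'.1 hw
  have hpos : (T.filter fun u => 0 < mu u).Nonempty := by
    obtain ⟨u, hu, hmu⟩ := Finset.exists_ne_zero_of_sum_ne_zero (hm1.trans_ne one_ne_zero)
    exact ⟨u, Finset.mem_filter.2 ⟨hu, (hm0 u hu).lt_of_ne' hmu⟩⟩
  -- `v` minimises `lam / mu`, so `c • w` can be subtracted from `x` keeping weights nonnegative,
  -- and the weight of `v` drops to zero.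
  obtain ⟨v, hvf, hvmin⟩ := Finset.exists_min_image _ (fun u => lam u / mu u) hpos
  obtain ⟨hv, hmv⟩ := Finset.mem_filter.1 hvf
  set c := lam v / mu v
  have hc0 : 0 ≤ c := div_nonneg (hl0 v hv) hmv.le
  have hcv : lam v - c * mu v = 0 := by rw [div_mul_cancel₀ _ hmv.ne', sub_self]
  have hle : ∀ u ∈ T, c * mu u ≤ lam u := fun u hu => by
    rcases (hm0 u hu).eq_or_lt with h | h
    · rw [← h, mul_zero]; exact hl0 u hu
    · exact (le_div_iff₀ h).1 (hvmin u (Finset.mem_filter.2 ⟨hu, h⟩))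
  refine ⟨v, hv, ?_⟩
  have hweights : ∀ u ∈ T,
      (lam u - c * mu u + if u = v then c else 0) • (if u = v then w else u) =
        (lam u - c * mu u) • u + if u = v then c • w else 0 := fun u _ => by
    split_ifs with h
    · rw [h, hcv, zero_add, zero_smul, zero_add]
    · rw [add_zero, add_zero]
  convert (convex_convexHull ℝ _).sum_mem (t := T)
    (w := fun u => lam u - c * mu u + if u = v then c else 0)
    (z := fun u => if u = v then w else u) (fun u hu => ?_) ?_ (fun u hu => ?_) using 1
  · rw [Finset.sum_congr rfl hweights, Finset.sum_add_distrib, Finset.sum_ite_eq' T v, if_pos hv]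
    simp only [sub_smul, Finset.sum_sub_distrib, mul_smul, ← Finset.smul_sum, hmw]
    abel
  · have := hle u hu
    split_ifs <;> linarith
  · rw [Finset.sum_add_distrib, Finset.sum_sub_distrib, ← Finset.mul_sum, hl1, hm1,
      Finset.sum_ite_eq' T v, if_pos hv]
    ring
  · apply subset_convexHull
    split_ifs with h
    · exact Finset.mem_insert_self _ _
    · exact Finset.mem_insert_of_mem (Finset.mem_erase.2 ⟨h, hu⟩)

theorem Finset.convexHull_insert_erase_subset [DecidableEq E] {T : Finset E} {w : E}
    (hw : w ∈ convexHull ℝ (T : Set E)) (v : E) :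
    convexHull ℝ ((insert w (T.erase v) : Finset E) : Set E) ⊆ convexHull ℝ (T : Set E) := by
  refine convexHull_min ?_ (convex_convexHull ℝ _)
  rw [Finset.coe_insert]
  exact Set.insert_subset hw
    ((Finset.coe_subset.2 (T.erase_subset v)).trans (subset_convexHull ℝ _))

theorem AffineIndependent.notMem_convexHull_insert_erase [DecidableEq E] {T : Finset E}
    (hT : AffineIndependent ℝ ((↑) : T → E)) {v w : E} (hv : v ∈ T)
    (hw : w ∈ convexHull ℝ (T : Set E)) (hwT : w ∉ T) :
    v ∉ convexHull ℝ ((insert w (T.erase v) : Finset E) : Set E) := fun h => by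
  have := extremePoints_convexHull_subset
    (inter_extremePoints_subset_extremePoints_of_subset (T.convexHull_insert_erase_subset hw v)
      ⟨h, hT.mem_extremePoints_convexHull hv⟩)
  rcases Finset.mem_insert.1 this with rfl | h
  · exact hwT hv
  · exact T.notMem_erase v h

end ConvexGeometry

section IntegerDecomposition

variable {E : Type*} [AddCommGroup E] [Module ℝ E] (Λ : AddSubgroup E)

def HasIntegerDecomposition (A : Set E) : Prop :=
  ∀ (d : ℕ) (y : E), y ∈ A → (d : ℝ) • y ∈ Λ →
    ∃ l : Multiset E, Multiset.card l = d ∧ (∀ p ∈ l, p ∈ A ∩ Λ) ∧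
      l.sum = (d : ℝ) • y

theorem hasIntegerDecomposition_of_forall_exists_subset {A : Set E}
    (h : ∀ y ∈ A, ∃ B ⊆ A, y ∈ B ∧ HasIntegerDecomposition Λ B) :
    HasIntegerDecomposition Λ A := fun d y hy hdy => by
  obtain ⟨B, hBA, hyB, hB⟩ := h y hy
  obtain ⟨l, hcard, hl, hsum⟩ := hB d y hyB hdy
  exact ⟨l, hcard, fun p hp => ⟨hBA (hl p hp).1, (hl p hp).2⟩, hsum⟩

variable {Λ} {T : Finset E}

theorem AffineIndependent.exists_weight_eq_one_of_convexHull_inter_subset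
    (hT : AffineIndependent ℝ ((↑) : T → E)) (hempty : convexHull ℝ (T : Set E) ∩ Λ ⊆ ↑T)
    {g : E → ℝ} (hg0 : ∀ u ∈ T, 0 ≤ g u)
    (hg1 : ∑ u ∈ T, g u = 1) (hgΛ : ∑ u ∈ T, g u • u ∈ Λ) :
    ∃ t ∈ T, g t = 1 ∧ ∀ u ∈ T, u ≠ t → g u = 0 := by
  classical
  have ht : ∑ u ∈ T, g u • u ∈ T := hempty ⟨Finset.mem_convexHull'.2 ⟨g, hg0, hg1, rfl⟩, hgΛ⟩
  have hδ := hT.eq_of_finset_sum_eq_sum (a := g)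
    (b := fun u => if u = ∑ u ∈ T, g u • u then 1 else 0)
    (by simp [ht, hg1]) (by simp [ite_smul, ht])
  refine ⟨_, ht, by simpa using hδ _ ht, fun u hu hut => by simpa [hut] using hδ u hu⟩

theorem AffineIndependent.fract_eq_zero_of_convexHull_inter_subset
    (hT : AffineIndependent ℝ ((↑) : T → E)) (hcard : T.card ≤ 3) (hTΛ : ↑T ⊆ (Λ : Set E))
    (hempty : convexHull ℝ (T : Set E) ∩ Λ ⊆ ↑T) {w : E → ℝ} {n : ℤ}
    (hwn : ∑ u ∈ T, w u = n) (hwΛ : ∑ u ∈ T, w u • u ∈ Λ) :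
    ∀ u ∈ T, Int.fract (w u) = 0 := by
  have hfΛ : ∑ u ∈ T, Int.fract (w u) • u ∈ Λ := by
    have : ∀ u ∈ T, Int.fract (w u) • u = w u • u - ⌊w u⌋ • u := fun u _ => by
      rw [← Int.self_sub_floor, sub_smul, Int.cast_smul_eq_zsmul]
    rw [Finset.sum_congr rfl this, Finset.sum_sub_distrib]
    exact sub_mem hwΛ (sum_mem fun u hu => zsmul_mem (hTΛ hu) _)
  have hfk : ∑ u ∈ T, Int.fract (w u) = ((n - ∑ u ∈ T, ⌊w u⌋ : ℤ) : ℝ) := by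
    simp only [← Int.self_sub_floor, Finset.sum_sub_distrib, hwn, Int.cast_sub, Int.cast_sum]
  set k := n - ∑ u ∈ T, ⌊w u⌋
  by_contra! ⟨u₀, hu₀, hne⟩
  have hpos : (0 : ℝ) < k := hfk ▸ Finset.sum_pos' (fun u _ => Int.fract_nonneg _)
    ⟨u₀, hu₀, (Int.fract_nonneg _).lt_of_ne' hne⟩
  have hlt : (k : ℝ) < T.card := by
    rw [← hfk, ← nsmul_one, ← Finset.sum_const]
    exact Finset.sum_lt_sum_of_nonempty ⟨u₀, hu₀⟩ fun u _ => Int.fract_lt_one _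
  have hk : k = 1 ∨ (k = 2 ∧ T.card = 3) := by
    have : (0 : ℤ) < k := by exact_mod_cast hpos
    have : k < T.card := by exact_mod_cast hlt
    omega
  rcases hk with hk | ⟨hk, hT3⟩
  · obtain ⟨t, -, hft, -⟩ := hT.exists_weight_eq_one_of_convexHull_inter_subset hempty
      (fun u _ => Int.fract_nonneg _) (by rw [hfk, hk, Int.cast_one]) hfΛ
    exact (Int.fract_lt_one (w t)).ne hft
  · obtain ⟨t, -, -, hgt⟩ := hT.exists_weight_eq_one_of_convexHull_inter_subset
      (g := fun u => 1 - Int.fract (w u)) hempty (fun u _ => sub_nonneg.2 (Int.fract_lt_one _).le)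
      (by rw [Finset.sum_sub_distrib, hfk, hk, Finset.sum_const, hT3]; norm_num)
      (by simpa only [sub_smul, one_smul, Finset.sum_sub_distrib] using
        sub_mem (sum_mem fun u hu => hTΛ hu) hfΛ)
    obtain ⟨u, hu, hut⟩ := Finset.exists_mem_ne (s := T) (by omega) t
    exact (Int.fract_lt_one (w u)).ne (sub_eq_zero.1 (hgt u hu hut)).symm

theorem AffineIndependent.hasIntegerDecomposition_convexHull
    (hT : AffineIndependent ℝ ((↑) : T → E)) (hcard : T.card ≤ 3) (hTΛ : ↑T ⊆ (Λ : Set E))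
    (hempty : convexHull ℝ (T : Set E) ∩ Λ ⊆ ↑T) :
    HasIntegerDecomposition Λ (convexHull ℝ (T : Set E)) := by
  intro d y hy hdy
  obtain ⟨lam, hl0, hl1, rfl⟩ := Finset.mem_convexHull'.1 hy
  have hint := hT.fract_eq_zero_of_convexHull_inter_subset hcard hTΛ hempty
    (w := fun u => d * lam u) (n := d) (by rw [← Finset.mul_sum, hl1, mul_one, Int.cast_natCast])
    (by simpa only [mul_smul, ← Finset.smul_sum] using hdy)
  have hnat : ∀ u ∈ T, ((⌊d * lam u⌋₊ : ℕ) : ℝ) = d * lam u := fun u hu => by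
    rw [natCast_floor_eq_intCast_floor (mul_nonneg d.cast_nonneg (hl0 u hu))]
    linarith [Int.self_sub_floor (d * lam u), hint u hu]
  refine ⟨T.val.bind fun u => Multiset.replicate ⌊d * lam u⌋₊ u, ?_, ?_, ?_⟩
  · rw [Multiset.card_bind]
    change ∑ u ∈ T, Multiset.card (Multiset.replicate ⌊d * lam u⌋₊ u) = d
    simp only [Multiset.card_replicate]
    have : ∑ u ∈ T, ((⌊d * lam u⌋₊ : ℕ) : ℝ) = d := by
      rw [Finset.sum_congr rfl hnat, ← Finset.mul_sum, hl1, mul_one]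
    exact_mod_cast this
  · intro p hp
    obtain ⟨u, hu, hpu⟩ := Multiset.mem_bind.1 hp
    rw [Multiset.eq_of_mem_replicate hpu]
    exact ⟨subset_convexHull ℝ _ hu, hTΛ hu⟩
  · rw [Multiset.sum_bind]
    change ∑ u ∈ T, (Multiset.replicate ⌊d * lam u⌋₊ u).sum = _
    simp only [Multiset.sum_replicate, ← Nat.cast_smul_eq_nsmul ℝ, Finset.smul_sum, ← mul_smul]
    exact Finset.sum_congr rfl fun u hu => by rw [hnat u hu]

theorem hasIntegerDecomposition_convexHull [FiniteDimensional ℝ E]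
    (hE : Module.finrank ℝ E ≤ 2) {V : Finset E} (hVΛ : ↑V ⊆ (Λ : Set E))
    (hfin : (convexHull ℝ (V : Set E) ∩ Λ).Finite) :
    HasIntegerDecomposition Λ (convexHull ℝ (V : Set E)) := by
  classical
  induction hn : (convexHull ℝ (V : Set E) ∩ Λ).ncard using Nat.strong_induction_on
    generalizing V with
  | _ n ih =>
  refine hasIntegerDecomposition_of_forall_exists_subset Λ fun y hy => ?_
  obtain ⟨T, hTV, hT, hyT⟩ : ∃ T : Finset E, ↑T ⊆ (V : Set E) ∧
      AffineIndependent ℝ ((↑) : T → E) ∧ y ∈ convexHull ℝ (T : Set E) := by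
    rw [convexHull_eq_union] at hy
    simpa only [Set.mem_iUnion, exists_prop] using hy
  have hTsub : convexHull ℝ (T : Set E) ⊆ convexHull ℝ (V : Set E) := convexHull_mono hTV
  by_cases hempty : convexHull ℝ (T : Set E) ∩ Λ ⊆ T
  · have hcard : T.card ≤ 3 := by
      have := hT.card_le_finrank_succ
      rw [Fintype.card_coe] at this
      linarith [Submodule.finrank_le (vectorSpan ℝ (Set.range ((↑) : T → E)))]
    exact ⟨_, hTsub, hyT,
      hT.hasIntegerDecomposition_convexHull hcard (hTV.trans hVΛ) hempty⟩
  -- Cone off from a non-vertex lattice point `w`: the piece containing `y` misses the vertex `v`,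
  -- so it has fewer lattice points.
  obtain ⟨w, ⟨hwT, hwΛ⟩, hwnT⟩ := Set.not_subset.1 hempty
  obtain ⟨v, hv, hyV'⟩ := Finset.exists_mem_convexHull_insert_erase hwT hyT
  set V' := insert w (T.erase v)
  have hV'T := Finset.convexHull_insert_erase_subset hwT v
  have hvV' := hT.notMem_convexHull_insert_erase hv hwT hwnT
  have hsub : convexHull ℝ (V' : Set E) ∩ Λ ⊆ convexHull ℝ (V : Set E) ∩ Λ :=
    Set.inter_subset_inter_left _ (hV'T.trans hTsub)
  have hlt : (convexHull ℝ (V' : Set E) ∩ Λ).ncard < n := hn ▸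
    Set.ncard_lt_ncard ((Set.ssubset_iff_of_subset hsub).2
      ⟨v, ⟨hTsub (subset_convexHull ℝ _ hv), hTV.trans hVΛ hv⟩, fun h => hvV' h.1⟩) hfin
  have hV'Λ : ↑V' ⊆ (Λ : Set E) := by
    rw [Finset.coe_insert]
    exact Set.insert_subset hwΛ
      ((Finset.coe_subset.2 (T.erase_subset v)).trans (hTV.trans hVΛ))
  exact ⟨_, hV'T.trans hTsub, hyV', ih _ hlt hV'Λ (hfin.subset hsub) rfl⟩

end IntegerDecomposition

section Polynomials

variable {σ ι R : Type*} [CommSemiring R]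

theorem MvPolynomial.isHomogeneous_multiset_prod_X (M : Multiset σ) :
    ((M.map X).prod : MvPolynomial σ R).IsHomogeneous (Multiset.card M) := by
  induction M using Multiset.induction_on with
  | empty => simpa using isHomogeneous_one σ R
  | cons i M ih =>
    rw [Multiset.map_cons, Multiset.prod_cons, Multiset.card_cons, add_comm]
    exact (isHomogeneous_X R i).mul ih

theorem MvPolynomial.aeval_multiset_prod_X_fin_two (e : ι → ℕ × ℕ) (M : Multiset ι) :
    aeval (fun k => (X 0 : MvPolynomial (Fin 2) R) ^ (e k).1 * X 1 ^ (e k).2)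
      ((M.map X).prod : MvPolynomial ι R) =
      (X 0 : MvPolynomial (Fin 2) R) ^ (M.map e).sum.1 * X 1 ^ (M.map e).sum.2 := by
  induction M using Multiset.induction_on with
  | empty => simp
  | cons i M ih =>
    simp only [Multiset.map_cons, Multiset.prod_cons, Multiset.sum_cons, map_mul, aeval_X, ih,
      Prod.fst_add, Prod.snd_add, pow_add]
    ring

theorem MvPolynomial.monomial_one_fin_two (α : Fin 2 →₀ ℕ) :
    (monomial α 1 : MvPolynomial (Fin 2) R) = X 0 ^ α 0 * X 1 ^ α 1 := by
  rw [monomial_eq, C_1, one_mul, Finsupp.prod_fintype _ _ fun _ => pow_zero _, Fin.prod_univ_two]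

theorem MvPolynomial.exists_isHomogeneous_eq_aeval_of_forall_monomial
    {φ : ι → MvPolynomial σ R} {f : MvPolynomial σ R} {d : ℕ}
    (h : ∀ α ∈ f.support,
      ∃ g : MvPolynomial ι R, g.IsHomogeneous d ∧ aeval φ g = monomial α 1) :
    ∃ g : MvPolynomial ι R, g.IsHomogeneous d ∧ f = aeval φ g := by
  choose! g hg hgα using h
  refine ⟨∑ α ∈ f.support, C (coeff α f) * g α,
    IsHomogeneous.sum _ _ _ fun α hα => (hg α hα).C_mul _, ?_⟩
  conv_lhs => rw [f.as_sum]
  simp only [map_sum, map_mul, aeval_C, algebraMap_eq]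
  exact Finset.sum_congr rfl fun α hα => by rw [hgα α hα, C_mul_monomial, mul_one]

end Polynomials

def integerLattice : AddSubgroup (ℝ × ℝ) :=
  ((Int.castAddHom ℝ).prodMap (Int.castAddHom ℝ)).range

def natCastProd : ℕ × ℕ →+ ℝ × ℝ :=
  (Nat.castAddMonoidHom ℝ).prodMap (Nat.castAddMonoidHom ℝ)

theorem natCastProd_injective : Function.Injective natCastProd :=
  Nat.cast_injective.prodMap Nat.cast_injective

theorem exists_multiset_card_eq_map_sum_eq {ι : Type*} [Finite ι] {S : Finset (ℕ × ℕ)}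
    {e : ι → ℕ × ℕ}
    (he : {z | natCastProd z ∈ convexHull ℝ (natCastProd '' S)} = Set.range e) (d : ℕ)
    {a : ℕ × ℕ} (ha : natCastProd a ∈ (d : ℝ) • convexHull ℝ (natCastProd '' S)) :
    ∃ M : Multiset ι, Multiset.card M = d ∧ (M.map e).sum = a := by
  classical
  set P := convexHull ℝ (natCastProd '' S)
  have hP0 : P ⊆ Set.Ici 0 :=
    convexHull_min (by rintro _ ⟨z, -, rfl⟩; exact ⟨z.1.cast_nonneg, z.2.cast_nonneg⟩)
      (convex_Ici 0)
  have hlatt : ∀ p ∈ P ∩ integerLattice, ∃ k, natCastProd (e k) = p := by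
    rintro _ ⟨hpP, ⟨⟨a, b⟩, rfl⟩⟩
    obtain ⟨ha0, hb0⟩ := hP0 hpP
    lift a to ℕ using by simpa using ha0
    lift b to ℕ using by simpa using hb0
    obtain ⟨k, hk⟩ : (a, b) ∈ Set.range e := he ▸ hpP
    exact ⟨k, by rw [hk]; rfl⟩
  obtain ⟨y, hyP, hya⟩ := Set.mem_smul_set.1 ha
  obtain ⟨l, hcard, hl, hsum⟩ := hasIntegerDecomposition_convexHull (Λ := integerLattice)
    (V := S.image natCastProd) (by simp) (by
      rw [Finset.coe_image]
      rintro _ ⟨z, -, rfl⟩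
      exact ⟨((z.1 : ℤ), (z.2 : ℤ)), rfl⟩)
    ((Set.finite_range (natCastProd ∘ e)).subset fun p hp => by
      simpa using hlatt p (by simpa using hp))
    d y (by simpa using hyP) (by rw [hya]; exact ⟨((a.1 : ℤ), (a.2 : ℤ)), rfl⟩)
  have : CanLift (ℝ × ℝ) ι (natCastProd ∘ e) (· ∈ P ∩ integerLattice) := ⟨hlatt⟩
  lift l to Multiset ι using by simpa using hl
  refine ⟨l, by rwa [Multiset.card_map] at hcard, ?_⟩
  apply natCastProd_injective
  rw [map_multiset_sum, Multiset.map_map, hsum, hya]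

theorem parametrization_factors_through_toric_embedding_general (K : Type*) [Field K]
    (S : Finset (ℕ × ℕ))
    (P : Set (ℝ × ℝ))
    (hP : P = convexHull ℝ ((fun z : ℕ × ℕ => ((z.1 : ℝ), (z.2 : ℝ))) '' (S : Set (ℕ × ℕ))))
    (d : ℕ)
    (m : ℕ) (e : Fin (m + 1) → ℕ × ℕ)
    (he : {z : ℕ × ℕ | ((z.1 : ℝ), (z.2 : ℝ)) ∈ P} = Set.range e)
    (f : MvPolynomial (Fin 2) K)
    (hf : ∀ α ∈ f.support, (((α 0 : ℕ) : ℝ), ((α 1 : ℕ) : ℝ)) ∈ (d : ℝ) • P) :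
    ∃ g : MvPolynomial (Fin (m + 1)) K, g.IsHomogeneous d ∧
      f = aeval (fun k : Fin (m + 1) => (X 0 : MvPolynomial (Fin 2) K) ^ (e k).1 * X 1 ^ (e k).2) g := by
  subst hP
  refine exists_isHomogeneous_eq_aeval_of_forall_monomial fun α hα => ?_
  obtain ⟨M, hcard, hsum⟩ := exists_multiset_card_eq_map_sum_eq he d (a := (α 0, α 1)) (hf α hα)
  refine ⟨(M.map X).prod, hcard ▸ isHomogeneous_multiset_prod_X M, ?_⟩
  rw [aeval_multiset_prod_X_fin_two, hsum, monomial_one_fin_two]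

/-- **Factorization through the toric embedding.** Let `K` be a field, `S ⊆ ℕ²` a nonempty
finite set with convex hull `P`, `d ≥ 1`, and let `(a₀,b₀), …, (a_m,b_m)` enumerate the
lattice points of `P`. If `f ∈ K[s,t]` has support contained in `d • P`, then there is a
homogeneous polynomial `g ∈ K[X₀,…,X_m]` of degree `d` with
`f(s,t) = g(s^{a₀} t^{b₀}, …, s^{a_m} t^{b_m})`. -/
theorem parametrization_factors_through_toric_embedding (K : Type*) [Field K]
    (S : Finset (ℕ × ℕ)) (hS : S.Nonempty)
    (P : Set (ℝ × ℝ))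
    (hP : P = convexHull ℝ ((fun z : ℕ × ℕ => ((z.1 : ℝ), (z.2 : ℝ))) '' (S : Set (ℕ × ℕ))))
    (d : ℕ) (hd : 1 ≤ d)
    (m : ℕ) (e : Fin (m + 1) → ℕ × ℕ)
    (he : {z : ℕ × ℕ | ((z.1 : ℝ), (z.2 : ℝ)) ∈ P} = Set.range e)
    (f : MvPolynomial (Fin 2) K)
    (hf : ∀ α ∈ f.support, (((α 0 : ℕ) : ℝ), ((α 1 : ℕ) : ℝ)) ∈ (d : ℝ) • P) :
    ∃ g : MvPolynomial (Fin (m + 1)) K, g.IsHomogeneous d ∧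
      f = aeval (fun k : Fin (m + 1) => (X 0 : MvPolynomial (Fin 2) K) ^ (e k).1 * X 1 ^ (e k).2) g :=
  parametrization_factors_through_toric_embedding_general K S P hP d m e he f hf
end

section
/- Let K be a field, let e₁, e₂ ≥ 1 be integers, and let φ : K[X_{i,j} : 0 ≤ i ≤ e₁, 0 ≤ j ≤ e₂] → K[s,u,t,v] be the K-algebra homomorphism defined by φ(X_{i,j}) = s^i u^{e₁−i} t^j v^{e₂−j}. Then the kernel of φ is generated, as an ideal, by the quadratic binomials X_{i,j} X_{k,l} − X_{i',j'} X_{k',l'} taken over all index quadruples satisfying i + k = i' + k' and j + l = j' + l'. -/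
open MvPolynomial

namespace SVAux

variable (K : Type*) [Field K] (e₁ e₂ : ℕ)

abbrev Idx := Fin (e₁ + 1) × Fin (e₂ + 1)

def gens : Set (MvPolynomial (Idx e₁ e₂) K) :=
  {f | ∃ p q p' q' : Idx e₁ e₂,
    (p.1 : ℕ) + (q.1 : ℕ) = (p'.1 : ℕ) + (q'.1 : ℕ) ∧
    (p.2 : ℕ) + (q.2 : ℕ) = (p'.2 : ℕ) + (q'.2 : ℕ) ∧
    f = X p * X q - X p' * X q'}

noncomputable def P (S : Multiset (Idx e₁ e₂)) : MvPolynomial (Idx e₁ e₂) K := (S.map X).prod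

def c1 (S : Multiset (Idx e₁ e₂)) : ℕ := (S.map fun p => (p.1 : ℕ)).sum
def c2 (S : Multiset (Idx e₁ e₂)) : ℕ := (S.map fun p => (p.2 : ℕ)).sum

def Rel (S T : Multiset (Idx e₁ e₂)) : Prop :=
  P K e₁ e₂ S - P K e₁ e₂ T ∈ Ideal.span (gens K e₁ e₂)

lemma P_cons (x : Idx e₁ e₂) (S : Multiset (Idx e₁ e₂)) :
    P K e₁ e₂ (x ::ₘ S) = X x * P K e₁ e₂ S := by simp [P]

lemma c1_cons (x : Idx e₁ e₂) (S : Multiset (Idx e₁ e₂)) :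
    c1 e₁ e₂ (x ::ₘ S) = (x.1 : ℕ) + c1 e₁ e₂ S := by simp [c1]

lemma c2_cons (x : Idx e₁ e₂) (S : Multiset (Idx e₁ e₂)) :
    c2 e₁ e₂ (x ::ₘ S) = (x.2 : ℕ) + c2 e₁ e₂ S := by simp [c2]

variable {e₁ e₂}

lemma rel_refl (S : Multiset (Idx e₁ e₂)) : Rel K e₁ e₂ S S := by
  simp [Rel]

lemma rel_symm {S T : Multiset (Idx e₁ e₂)} (h : Rel K e₁ e₂ S T) : Rel K e₁ e₂ T S := by
  have := neg_mem h
  rwa [neg_sub] at this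

lemma rel_trans {S T U : Multiset (Idx e₁ e₂)} (h1 : Rel K e₁ e₂ S T) (h2 : Rel K e₁ e₂ T U) :
    Rel K e₁ e₂ S U := by
  have := Ideal.add_mem _ h1 h2
  rwa [sub_add_sub_cancel] at this

lemma rel_cons (x : Idx e₁ e₂) {S T : Multiset (Idx e₁ e₂)} (h : Rel K e₁ e₂ S T) :
    Rel K e₁ e₂ (x ::ₘ S) (x ::ₘ T) := by
  unfold Rel at *
  rw [P_cons, P_cons, ← mul_sub]
  exact Ideal.mul_mem_left _ _ h

lemma rel_move (p q p' q' : Idx e₁ e₂) (R : Multiset (Idx e₁ e₂))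
    (h1 : (p.1 : ℕ) + (q.1 : ℕ) = (p'.1 : ℕ) + (q'.1 : ℕ))
    (h2 : (p.2 : ℕ) + (q.2 : ℕ) = (p'.2 : ℕ) + (q'.2 : ℕ)) :
    Rel K e₁ e₂ (p ::ₘ q ::ₘ R) (p' ::ₘ q' ::ₘ R) := by
  unfold Rel
  have : P K e₁ e₂ (p ::ₘ q ::ₘ R) - P K e₁ e₂ (p' ::ₘ q' ::ₘ R)
      = (X p * X q - X p' * X q') * P K e₁ e₂ R := by
    simp only [P_cons]; ring
  rw [this]
  exact Ideal.mul_mem_right _ _ (Ideal.subset_span ⟨p, q, p', q', h1, h2, rfl⟩)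

lemma exists_pos_c1 {T : Multiset (Idx e₁ e₂)} (h : 0 < c1 e₁ e₂ T) :
    ∃ q ∈ T, 0 < (q.1 : ℕ) := by
  by_contra hc
  push_neg at hc
  have : c1 e₁ e₂ T = 0 := by
    apply Multiset.sum_eq_zero
    intro x hx
    obtain ⟨q, hq, rfl⟩ := Multiset.mem_map.mp hx
    exact Nat.le_zero.mp (hc q hq)
  omega


lemma exists_pos_c2 {T : Multiset (Idx e₁ e₂)} (h : 0 < c2 e₁ e₂ T) :
    ∃ q ∈ T, 0 < (q.2 : ℕ) := by
  by_contra hc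
  push_neg at hc
  have : c2 e₁ e₂ T = 0 := by
    apply Multiset.sum_eq_zero
    intro x hx
    obtain ⟨q, hq, rfl⟩ := Multiset.mem_map.mp hx
    exact Nat.le_zero.mp (hc q hq)
  omega

lemma phase1 : ∀ (k : ℕ) (S : Multiset (Idx e₁ e₂)) (p : Idx e₁ e₂), p ∈ S →
    (p.1 : ℕ) + k = min (c1 e₁ e₂ S) e₁ →
    ∃ (x : Fin (e₁ + 1)) (S' : Multiset (Idx e₁ e₂)),
      (x : ℕ) = min (c1 e₁ e₂ S) e₁ ∧ Rel K e₁ e₂ S ((x, p.2) ::ₘ S') ∧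
      Multiset.card S' + 1 = Multiset.card S ∧
      (x : ℕ) + c1 e₁ e₂ S' = c1 e₁ e₂ S ∧ (p.2 : ℕ) + c2 e₁ e₂ S' = c2 e₁ e₂ S := by
  intro k
  induction k with
  | zero =>
    intro S p hp hk
    refine ⟨p.1, S.erase p, by omega, ?_, ?_, ?_, ?_⟩
    · rw [show ((p.1 : Fin (e₁+1)), p.2) = p from rfl, Multiset.cons_erase hp]
      exact rel_refl K S
    · rw [← Multiset.card_cons p, Multiset.cons_erase hp]
    · conv_rhs => rw [← Multiset.cons_erase hp, c1_cons]
    · conv_rhs => rw [← Multiset.cons_erase hp, c2_cons]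
  | succ k ih =>
    intro S p hp hk
    have hmin1 : min (c1 e₁ e₂ S) e₁ ≤ e₁ := Nat.min_le_right _ _
    have hmin2 : min (c1 e₁ e₂ S) e₁ ≤ c1 e₁ e₂ S := Nat.min_le_left _ _
    have hc1S : c1 e₁ e₂ S = (p.1 : ℕ) + c1 e₁ e₂ (S.erase p) := by
      conv_lhs => rw [← Multiset.cons_erase hp, c1_cons]
    obtain ⟨q, hqT, hq1⟩ := exists_pos_c1 (T := S.erase p) (by omega)
    set T' := (S.erase p).erase q with hT'
    have hT : S.erase p = q ::ₘ T' := (Multiset.cons_erase hqT).symm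
    have hS : S = p ::ₘ q ::ₘ T' := by rw [← hT, Multiset.cons_erase hp]
    have hq1e : (q.1 : ℕ) ≤ e₁ := by omega
    set p' : Idx e₁ e₂ := (⟨(p.1 : ℕ) + 1, by omega⟩, p.2) with hp'
    set q' : Idx e₁ e₂ := (⟨(q.1 : ℕ) - 1, by omega⟩, q.2) with hq'
    have hmove : Rel K e₁ e₂ (p ::ₘ q ::ₘ T') (p' ::ₘ q' ::ₘ T') := by
      refine rel_move K p q p' q' T' ?_ ?_
      · show (p.1 : ℕ) + (q.1 : ℕ) = ((p.1 : ℕ) + 1) + ((q.1 : ℕ) - 1)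
        omega
      · rfl
    set S₂ := p' ::ₘ q' ::ₘ T' with hS₂
    have hc1 : c1 e₁ e₂ S₂ = c1 e₁ e₂ S := by
      rw [hS, hS₂, c1_cons, c1_cons, c1_cons, c1_cons]
      show ((p.1 : ℕ) + 1) + (((q.1 : ℕ) - 1) + _) = _
      omega
    have hc2 : c2 e₁ e₂ S₂ = c2 e₁ e₂ S := by
      rw [hS, hS₂, c2_cons, c2_cons, c2_cons, c2_cons]
    have hcard : Multiset.card S₂ = Multiset.card S := by rw [hS, hS₂]; simp
    obtain ⟨x, S', hx, hrel2, hcard2, hc12, hc22⟩ :=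
      ih S₂ p' (Multiset.mem_cons_self _ _) (by
        show ((p.1 : ℕ) + 1) + k = _
        omega)
    have hp'2 : ((p'.2 : Fin (e₂+1)) : ℕ) = (p.2 : ℕ) := rfl
    refine ⟨x, S', by omega, ?_, by omega, by omega, by omega⟩
    exact rel_trans K (hS ▸ hmove) hrel2

lemma phase2 : ∀ (k : ℕ) (S : Multiset (Idx e₁ e₂)) (p : Idx e₁ e₂), p ∈ S →
    (p.2 : ℕ) + k = min (c2 e₁ e₂ S) e₂ →
    ∃ (y : Fin (e₂ + 1)) (S' : Multiset (Idx e₁ e₂)),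
      (y : ℕ) = min (c2 e₁ e₂ S) e₂ ∧ Rel K e₁ e₂ S ((p.1, y) ::ₘ S') ∧
      Multiset.card S' + 1 = Multiset.card S ∧
      (p.1 : ℕ) + c1 e₁ e₂ S' = c1 e₁ e₂ S ∧ (y : ℕ) + c2 e₁ e₂ S' = c2 e₁ e₂ S := by
  intro k
  induction k with
  | zero =>
    intro S p hp hk
    refine ⟨p.2, S.erase p, by omega, ?_, ?_, ?_, ?_⟩
    · rw [show (p.1, (p.2 : Fin (e₂+1))) = p from rfl, Multiset.cons_erase hp]
      exact rel_refl K S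
    · rw [← Multiset.card_cons p, Multiset.cons_erase hp]
    · conv_rhs => rw [← Multiset.cons_erase hp, c1_cons]
    · conv_rhs => rw [← Multiset.cons_erase hp, c2_cons]
  | succ k ih =>
    intro S p hp hk
    have hmin1 : min (c2 e₁ e₂ S) e₂ ≤ e₂ := Nat.min_le_right _ _
    have hmin2 : min (c2 e₁ e₂ S) e₂ ≤ c2 e₁ e₂ S := Nat.min_le_left _ _
    have hc2S : c2 e₁ e₂ S = (p.2 : ℕ) + c2 e₁ e₂ (S.erase p) := by
      conv_lhs => rw [← Multiset.cons_erase hp, c2_cons]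
    obtain ⟨q, hqT, hq1⟩ := exists_pos_c2 (T := S.erase p) (by omega)
    set T' := (S.erase p).erase q with hT'
    have hT : S.erase p = q ::ₘ T' := (Multiset.cons_erase hqT).symm
    have hS : S = p ::ₘ q ::ₘ T' := by rw [← hT, Multiset.cons_erase hp]
    have hq1e : (q.2 : ℕ) ≤ e₂ := by omega
    set p' : Idx e₁ e₂ := (p.1, ⟨(p.2 : ℕ) + 1, by omega⟩) with hp'
    set q' : Idx e₁ e₂ := (q.1, ⟨(q.2 : ℕ) - 1, by omega⟩) with hq'
    have hmove : Rel K e₁ e₂ (p ::ₘ q ::ₘ T') (p' ::ₘ q' ::ₘ T') := by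
      refine rel_move K p q p' q' T' rfl ?_
      show (p.2 : ℕ) + (q.2 : ℕ) = ((p.2 : ℕ) + 1) + ((q.2 : ℕ) - 1)
      omega
    set S₂ := p' ::ₘ q' ::ₘ T' with hS₂
    have hc2 : c2 e₁ e₂ S₂ = c2 e₁ e₂ S := by
      rw [hS, hS₂, c2_cons, c2_cons, c2_cons, c2_cons]
      show ((p.2 : ℕ) + 1) + (((q.2 : ℕ) - 1) + _) = _
      omega
    have hc1 : c1 e₁ e₂ S₂ = c1 e₁ e₂ S := by
      rw [hS, hS₂, c1_cons, c1_cons, c1_cons, c1_cons]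
    have hcard : Multiset.card S₂ = Multiset.card S := by rw [hS, hS₂]; simp
    obtain ⟨y, S', hy, hrel2, hcard2, hc12, hc22⟩ :=
      ih S₂ p' (Multiset.mem_cons_self _ _) (by
        show ((p.2 : ℕ) + 1) + k = _
        omega)
    have hp'1 : ((p'.1 : Fin (e₁+1)) : ℕ) = (p.1 : ℕ) := rfl
    refine ⟨y, S', by omega, ?_, by omega, by omega, by omega⟩
    exact rel_trans K (hS ▸ hmove) hrel2


lemma c1_le (S : Multiset (Idx e₁ e₂)) : c1 e₁ e₂ S ≤ Multiset.card S * e₁ := by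
  induction S using Multiset.induction with
  | empty => simp [c1]
  | cons a S ih =>
    rw [c1_cons]
    have : (a.1 : ℕ) ≤ e₁ := by omega
    simp only [Multiset.card_cons]
    nlinarith

lemma c2_le (S : Multiset (Idx e₁ e₂)) : c2 e₁ e₂ S ≤ Multiset.card S * e₂ := by
  induction S using Multiset.induction with
  | empty => simp [c2]
  | cons a S ih =>
    rw [c2_cons]
    have : (a.2 : ℕ) ≤ e₂ := by omega
    simp only [Multiset.card_cons]
    nlinarith

lemma extract (S : Multiset (Idx e₁ e₂)) (h : 0 < Multiset.card S) :
    ∃ (x : Fin (e₁ + 1)) (y : Fin (e₂ + 1)) (T : Multiset (Idx e₁ e₂)),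
      (x : ℕ) = min (c1 e₁ e₂ S) e₁ ∧ (y : ℕ) = min (c2 e₁ e₂ S) e₂ ∧
      Rel K e₁ e₂ S ((x, y) ::ₘ T) ∧ Multiset.card T + 1 = Multiset.card S ∧
      (x : ℕ) + c1 e₁ e₂ T = c1 e₁ e₂ S ∧ (y : ℕ) + c2 e₁ e₂ T = c2 e₁ e₂ S := by
  obtain ⟨p, hp⟩ := Multiset.card_pos_iff_exists_mem.mp h
  have hp1S : (p.1 : ℕ) ≤ c1 e₁ e₂ S := by
    have : c1 e₁ e₂ S = (p.1 : ℕ) + c1 e₁ e₂ (S.erase p) := by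
      conv_lhs => rw [← Multiset.cons_erase hp, c1_cons]
    omega
  have hp1 : (p.1 : ℕ) ≤ min (c1 e₁ e₂ S) e₁ := by omega
  obtain ⟨x, S', hx, hrel1, hcard1, hc11, hc21⟩ :=
    phase1 K (min (c1 e₁ e₂ S) e₁ - (p.1 : ℕ)) S p hp (by omega)
  set pt : Idx e₁ e₂ := (x, p.2) with hpt
  set S₂ := pt ::ₘ S' with hS₂
  have hc1₂ : c1 e₁ e₂ S₂ = c1 e₁ e₂ S := by rw [hS₂, c1_cons]; exact hc11
  have hc2₂ : c2 e₁ e₂ S₂ = c2 e₁ e₂ S := by rw [hS₂, c2_cons]; exact hc21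
  have hcard₂ : Multiset.card S₂ = Multiset.card S := by rw [hS₂]; simp; omega
  have hpt2 : (pt.2 : ℕ) ≤ min (c2 e₁ e₂ S₂) e₂ := by
    have h1 : (pt.2 : ℕ) = (p.2 : ℕ) := rfl
    have h2 : (p.2 : ℕ) ≤ e₂ := by omega
    omega
  obtain ⟨y, S'', hy, hrel2, hcard2, hc12, hc22⟩ :=
    phase2 K (min (c2 e₁ e₂ S₂) e₂ - (pt.2 : ℕ)) S₂ pt (Multiset.mem_cons_self _ _)
      (by omega)
  have hpt1 : ((pt.1 : Fin (e₁+1)) : ℕ) = (x : ℕ) := rfl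
  refine ⟨pt.1, y, S'', by omega, by omega, rel_trans K hrel1 hrel2, by omega, by omega,
    by omega⟩

lemma rel_of_data (he₁ : 1 ≤ e₁) (he₂ : 1 ≤ e₂) :
    ∀ (n : ℕ) (S T : Multiset (Idx e₁ e₂)), Multiset.card S = n → Multiset.card T = n →
    c1 e₁ e₂ S = c1 e₁ e₂ T → c2 e₁ e₂ S = c2 e₁ e₂ T → Rel K e₁ e₂ S T := by
  intro n
  induction n with
  | zero =>
    intro S T hS hT _ _
    rw [Multiset.card_eq_zero.mp hS, Multiset.card_eq_zero.mp hT]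
    exact rel_refl K 0
  | succ n ih =>
    intro S T hS hT h1 h2
    obtain ⟨x, y, S', hx, hy, hrelS, hcardS, hc1S, hc2S⟩ := extract K S (by omega)
    obtain ⟨x', y', T', hx', hy', hrelT, hcardT, hc1T, hc2T⟩ := extract K T (by omega)
    have hxx : x = x' := Fin.ext (by omega)
    have hyy : y = y' := Fin.ext (by omega)
    subst hxx hyy
    have hrest : Rel K e₁ e₂ S' T' := ih S' T' (by omega) (by omega) (by omega) (by omega)
    exact rel_trans K hrelS (rel_trans K (rel_cons K _ hrest) (rel_symm K hrelT))


/-! ### Weights and the monomial map -/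

noncomputable def w (p : Idx e₁ e₂) : Fin 4 →₀ ℕ :=
  Finsupp.single 0 (p.1 : ℕ) + Finsupp.single 1 (e₁ - (p.1 : ℕ)) +
    Finsupp.single 2 (p.2 : ℕ) + Finsupp.single 3 (e₂ - (p.2 : ℕ))

lemma w_apply0 (p : Idx e₁ e₂) : w p 0 = (p.1 : ℕ) := by
  simp [w, Finsupp.single_apply]
lemma w_apply1 (p : Idx e₁ e₂) : w p 1 = e₁ - (p.1 : ℕ) := by
  simp [w, Finsupp.single_apply]
lemma w_apply2 (p : Idx e₁ e₂) : w p 2 = (p.2 : ℕ) := by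
  simp [w, Finsupp.single_apply]
lemma w_apply3 (p : Idx e₁ e₂) : w p 3 = e₂ - (p.2 : ℕ) := by
  simp [w, Finsupp.single_apply]

noncomputable def D (m : Idx e₁ e₂ →₀ ℕ) : Fin 4 →₀ ℕ := m.sum fun p k => k • w p

noncomputable def gen : Idx e₁ e₂ → MvPolynomial (Fin 4) K := fun p =>
  (X 0 : MvPolynomial (Fin 4) K) ^ (p.1 : ℕ) * X 1 ^ (e₁ - (p.1 : ℕ)) *
    X 2 ^ (p.2 : ℕ) * X 3 ^ (e₂ - (p.2 : ℕ))

lemma gen_eq (p : Idx e₁ e₂) : gen K p = monomial (w p) 1 := by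
  simp [gen, w, X_pow_eq_monomial, monomial_mul]

lemma aeval_gen_monomial (m : Idx e₁ e₂ →₀ ℕ) (c : K) :
    aeval (gen K) (monomial m c) = monomial (D m) c := by
  rw [aeval_monomial, D, monomial_finsupp_sum_index, algebraMap_eq]
  congr 1
  apply Finsupp.prod_congr
  intro p _
  rw [gen_eq, monomial_pow, one_pow]

def deg (m : Idx e₁ e₂ →₀ ℕ) : ℕ := m.sum fun _ k => k
def A (m : Idx e₁ e₂ →₀ ℕ) : ℕ := m.sum fun p k => k * (p.1 : ℕ)
def B (m : Idx e₁ e₂ →₀ ℕ) : ℕ := m.sum fun p k => k * (p.2 : ℕ)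

lemma D_apply (m : Idx e₁ e₂ →₀ ℕ) (t : Fin 4) : D m t = m.sum fun p k => k * w p t := by
  rw [D, Finsupp.sum_apply]
  apply Finsupp.sum_congr
  intro p _
  rw [Finsupp.smul_apply, smul_eq_mul]

lemma D_apply0 (m : Idx e₁ e₂ →₀ ℕ) : D m 0 = A m := by
  rw [D_apply, A]; apply Finsupp.sum_congr; intro p _; rw [w_apply0]

lemma D_apply2 (m : Idx e₁ e₂ →₀ ℕ) : D m 2 = B m := by
  rw [D_apply, B]; apply Finsupp.sum_congr; intro p _; rw [w_apply2]

lemma D01 (m : Idx e₁ e₂ →₀ ℕ) : D m 0 + D m 1 = e₁ * deg m := by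
  rw [D_apply, D_apply, deg, Finsupp.sum, Finsupp.sum, Finsupp.sum, ← Finset.sum_add_distrib,
    Finset.mul_sum]
  apply Finset.sum_congr rfl
  intro p _
  rw [w_apply0, w_apply1, ← Nat.mul_add]
  have : (p.1 : ℕ) + (e₁ - (p.1 : ℕ)) = e₁ := by omega
  rw [this, Nat.mul_comm]

lemma D23 (m : Idx e₁ e₂ →₀ ℕ) : D m 2 + D m 3 = e₂ * deg m := by
  rw [D_apply, D_apply, deg, Finsupp.sum, Finsupp.sum, Finsupp.sum, ← Finset.sum_add_distrib,
    Finset.mul_sum]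
  apply Finset.sum_congr rfl
  intro p _
  rw [w_apply2, w_apply3, ← Nat.mul_add]
  have : (p.2 : ℕ) + (e₂ - (p.2 : ℕ)) = e₂ := by omega
  rw [this, Nat.mul_comm]

/-! ### Bridges between finsupps and multisets -/

lemma P_toMultiset (m : Idx e₁ e₂ →₀ ℕ) :
    P K e₁ e₂ m.toMultiset = monomial m 1 := by
  refine m.induction ?_ ?_
  · simp [P]
  · intro a n f _ _ ih
    rw [Finsupp.toMultiset_add, Finsupp.toMultiset_single, Multiset.nsmul_singleton]
    rw [P, Multiset.map_add, Multiset.prod_add, Multiset.map_replicate, Multiset.prod_replicate]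
    rw [show ((Multiset.map X f.toMultiset).prod : MvPolynomial (Idx e₁ e₂) K)
        = P K e₁ e₂ f.toMultiset from rfl, ih]
    rw [X_pow_eq_monomial, monomial_mul, one_mul]

lemma card_toMultiset' (m : Idx e₁ e₂ →₀ ℕ) : Multiset.card m.toMultiset = deg m := by
  rw [Finsupp.card_toMultiset]; rfl

lemma c1_toMultiset (m : Idx e₁ e₂ →₀ ℕ) : c1 e₁ e₂ m.toMultiset = A m := by
  refine m.induction ?_ ?_
  · simp [c1, A, Finsupp.sum_zero_index]
  · intro a n f _ _ ih
    rw [Finsupp.toMultiset_add, Finsupp.toMultiset_single, Multiset.nsmul_singleton]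
    rw [c1, Multiset.map_add, Multiset.sum_add, Multiset.map_replicate, Multiset.sum_replicate,
      smul_eq_mul]
    rw [show ((Multiset.map (fun p => ((p.1 : ℕ) : ℕ)) f.toMultiset).sum) = c1 e₁ e₂ f.toMultiset
        from rfl, ih]
    have hA : A (Finsupp.single a n + f) = n * (a.1 : ℕ) + A f := by
      rw [A, A, Finsupp.sum_add_index' (h := fun (p : Idx e₁ e₂) k => k * (p.1 : ℕ))
        (fun _ => zero_mul _) (fun _ _ _ => add_mul _ _ _)]
      congr 1
      exact Finsupp.sum_single_index (zero_mul _)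
    rw [hA]

lemma c2_toMultiset (m : Idx e₁ e₂ →₀ ℕ) : c2 e₁ e₂ m.toMultiset = B m := by
  refine m.induction ?_ ?_
  · simp [c2, B, Finsupp.sum_zero_index]
  · intro a n f _ _ ih
    rw [Finsupp.toMultiset_add, Finsupp.toMultiset_single, Multiset.nsmul_singleton]
    rw [c2, Multiset.map_add, Multiset.sum_add, Multiset.map_replicate, Multiset.sum_replicate,
      smul_eq_mul]
    rw [show ((Multiset.map (fun p => ((p.2 : ℕ) : ℕ)) f.toMultiset).sum) = c2 e₁ e₂ f.toMultiset
        from rfl, ih]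
    have hB : B (Finsupp.single a n + f) = n * (a.2 : ℕ) + B f := by
      rw [B, B, Finsupp.sum_add_index' (h := fun (p : Idx e₁ e₂) k => k * (p.2 : ℕ))
        (fun _ => zero_mul _) (fun _ _ _ => add_mul _ _ _)]
      congr 1
      exact Finsupp.sum_single_index (zero_mul _)
    rw [hB]

lemma binomial_mem (he₁ : 1 ≤ e₁) (he₂ : 1 ≤ e₂) {m₁ m₂ : Idx e₁ e₂ →₀ ℕ}
    (h : D m₁ = D m₂) :
    (monomial m₁ 1 - monomial m₂ 1 : MvPolynomial (Idx e₁ e₂) K) ∈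
      Ideal.span (gens K e₁ e₂) := by
  have h0 : A m₁ = A m₂ := by rw [← D_apply0, ← D_apply0, h]
  have h2 : B m₁ = B m₂ := by rw [← D_apply2, ← D_apply2, h]
  have hdeg : deg m₁ = deg m₂ := by
    have h01 := D01 m₁
    have h01' := D01 m₂
    have h1 : D m₁ 1 = D m₂ 1 := by rw [h]
    have h00 : D m₁ 0 = D m₂ 0 := by rw [h]
    have : e₁ * deg m₁ = e₁ * deg m₂ := by omega
    exact Nat.eq_of_mul_eq_mul_left (by omega) this
  rw [← P_toMultiset K m₁, ← P_toMultiset K m₂]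
  exact rel_of_data K he₁ he₂ (deg m₁) _ _ (card_toMultiset' m₁)
    (by rw [card_toMultiset', hdeg])
    (by rw [c1_toMultiset, c1_toMultiset, h0]) (by rw [c2_toMultiset, c2_toMultiset, h2])


lemma gens_subset_ker : ∀ f ∈ gens K e₁ e₂, aeval (gen K) f = 0 := by
  rintro f ⟨p, q, p', q', h1, h2, rfl⟩
  have b1 : (p.1 : ℕ) ≤ e₁ := by omega
  have b2 : (q.1 : ℕ) ≤ e₁ := by omega
  have b3 : (p'.1 : ℕ) ≤ e₁ := by omega
  have b4 : (q'.1 : ℕ) ≤ e₁ := by omega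
  have b5 : (p.2 : ℕ) ≤ e₂ := by omega
  have b6 : (q.2 : ℕ) ≤ e₂ := by omega
  have b7 : (p'.2 : ℕ) ≤ e₂ := by omega
  have b8 : (q'.2 : ℕ) ≤ e₂ := by omega
  have key : ∀ r r' : Idx e₁ e₂, w r + w r' =
      Finsupp.single 0 ((r.1 : ℕ) + (r'.1 : ℕ)) +
        Finsupp.single 1 ((e₁ - (r.1 : ℕ)) + (e₁ - (r'.1 : ℕ))) +
        Finsupp.single 2 ((r.2 : ℕ) + (r'.2 : ℕ)) +
        Finsupp.single 3 ((e₂ - (r.2 : ℕ)) + (e₂ - (r'.2 : ℕ))) := by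
    intro r r'
    rw [w, w]
    simp only [Finsupp.single_add]
    abel
  have hw : w p + w q = w p' + w q' := by
    rw [key p q, key p' q', h1, h2,
      show (e₁ - (p.1 : ℕ)) + (e₁ - (q.1 : ℕ)) = (e₁ - (p'.1 : ℕ)) + (e₁ - (q'.1 : ℕ)) by omega,
      show (e₂ - (p.2 : ℕ)) + (e₂ - (q.2 : ℕ)) = (e₂ - (p'.2 : ℕ)) + (e₂ - (q'.2 : ℕ)) by omega]
  rw [map_sub, map_mul, map_mul, aeval_X, aeval_X, aeval_X, aeval_X,
    gen_eq, gen_eq, gen_eq, gen_eq, monomial_mul, monomial_mul, hw, sub_self]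

lemma ker_le_span (he₁ : 1 ≤ e₁) (he₂ : 1 ≤ e₂) :
    ∀ (n : ℕ) (f : MvPolynomial (Idx e₁ e₂) K), f.support.card ≤ n →
      aeval (gen K) f = 0 → f ∈ Ideal.span (gens K e₁ e₂) := by
  intro n
  induction n with
  | zero =>
    intro f hcard _
    have : f = 0 := by
      rw [← support_eq_empty]
      exact Finset.card_eq_zero.mp (Nat.le_zero.mp hcard)
    rw [this]; exact Ideal.zero_mem _
  | succ n ih =>
    intro f hcard hf0
    by_cases hf : f = 0
    · rw [hf]; exact Ideal.zero_mem _
    obtain ⟨m, hm⟩ : f.support.Nonempty := support_nonempty.mpr hf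
    classical
    have hrepr : aeval (gen K) f = ∑ m' ∈ f.support, monomial (D m') (coeff m' f) := by
      conv_lhs => rw [f.as_sum]
      rw [map_sum]
      exact Finset.sum_congr rfl fun m' _ => aeval_gen_monomial K m' _
    have hco : ∑ m' ∈ f.support.filter (fun m' => D m' = D m), coeff m' f = 0 := by
      have h0 : coeff (D m) (aeval (gen K) f) = 0 := by rw [hf0, coeff_zero]
      rw [hrepr, coeff_sum] at h0
      simp_rw [coeff_monomial] at h0
      rw [Finset.sum_filter]
      exact h0
    have hex : ∃ m' ∈ f.support.filter (fun m' => D m' = D m), m' ≠ m := by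
      by_contra hcon
      push_neg at hcon
      have hmem : m ∈ f.support.filter (fun m' => D m' = D m) :=
        Finset.mem_filter.mpr ⟨hm, rfl⟩
      have heq : f.support.filter (fun m' => D m' = D m) = {m} :=
        Finset.eq_singleton_iff_unique_mem.mpr ⟨hmem, hcon⟩
      rw [heq, Finset.sum_singleton] at hco
      exact mem_support_iff.mp hm hco
    obtain ⟨m', hm'f, hm'ne⟩ := hex
    rw [Finset.mem_filter] at hm'f
    obtain ⟨hm's, hDm'⟩ := hm'f
    set c := coeff m f with hc
    set b : MvPolynomial (Idx e₁ e₂) K := monomial m 1 - monomial m' 1 with hb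
    have hbJ : b ∈ Ideal.span (gens K e₁ e₂) := binomial_mem K he₁ he₂ hDm'.symm
    have hb0 : aeval (gen K) b = 0 := by
      rw [hb, map_sub, aeval_gen_monomial, aeval_gen_monomial, hDm', sub_self]
    set g := f - C c * b with hg
    have hg0 : aeval (gen K) g = 0 := by
      rw [hg, map_sub, map_mul, hb0, hf0, mul_zero, sub_zero]
    have hcu : ∀ u, coeff u g =
        coeff u f - c * ((if m = u then 1 else 0) - if m' = u then 1 else 0) := by
      intro u
      rw [hg, hb, coeff_sub, coeff_C_mul, mul_sub, coeff_sub, mul_sub, coeff_monomial,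
        coeff_monomial]
    have hgsub : g.support ⊆ f.support.erase m := by
      intro u hu
      rw [Finset.mem_erase]
      constructor
      · intro hum
        subst hum
        apply mem_support_iff.mp hu
        rw [hcu u, if_pos rfl, if_neg hm'ne, ← hc]
        ring
      · by_contra hus
        have h1 : coeff u f = 0 := notMem_support_iff.mp hus
        have hum : m ≠ u := fun h => hus (h ▸ hm)
        have hum' : m' ≠ u := fun h => hus (h ▸ hm's)
        apply mem_support_iff.mp hu
        rw [hcu u, h1, if_neg hum, if_neg hum']
        ring
    have hcard' : g.support.card ≤ n := by
      have h1 := Finset.card_le_card hgsub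
      have h2 : (f.support.erase m).card = f.support.card - 1 := Finset.card_erase_of_mem hm
      have h3 : 1 ≤ f.support.card := Finset.card_pos.mpr ⟨m, hm⟩
      omega
    have hgJ := ih g hcard' hg0
    have hfg : f = g + C c * b := by rw [hg]; ring
    rw [hfg]
    exact Ideal.add_mem _ hgJ (Ideal.mul_mem_left _ _ hbJ)

end SVAux

open SVAux in
/-- **The Segre–Veronese ideal is generated by quadratic binomials.** Let `K` be a field,
`e₁, e₂ ≥ 1`, and let `φ : K[X_{i,j} : 0 ≤ i ≤ e₁, 0 ≤ j ≤ e₂] → K[s,u,t,v]` be the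
`K`-algebra map with `φ(X_{i,j}) = s^i u^{e₁-i} t^j v^{e₂-j}`. Then `ker φ` is generated
by the binomials `X_{i,j} X_{k,l} − X_{i',j'} X_{k',l'}` with `i + k = i' + k'` and
`j + l = j' + l'`. -/
theorem segre_veronese_ideal_generated_by_quadratic_binomials (K : Type*) [Field K]
    (e₁ e₂ : ℕ) (he₁ : 1 ≤ e₁) (he₂ : 1 ≤ e₂)
    (φ : MvPolynomial (Fin (e₁ + 1) × Fin (e₂ + 1)) K →ₐ[K] MvPolynomial (Fin 4) K)
    (hφ : φ = aeval (fun p : Fin (e₁ + 1) × Fin (e₂ + 1) =>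
      (X 0 : MvPolynomial (Fin 4) K) ^ (p.1 : ℕ) * X 1 ^ (e₁ - (p.1 : ℕ)) *
        X 2 ^ (p.2 : ℕ) * X 3 ^ (e₂ - (p.2 : ℕ)))) :
    RingHom.ker φ.toRingHom =
      Ideal.span {f : MvPolynomial (Fin (e₁ + 1) × Fin (e₂ + 1)) K |
        ∃ p q p' q' : Fin (e₁ + 1) × Fin (e₂ + 1),
          (p.1 : ℕ) + (q.1 : ℕ) = (p'.1 : ℕ) + (q'.1 : ℕ) ∧
          (p.2 : ℕ) + (q.2 : ℕ) = (p'.2 : ℕ) + (q'.2 : ℕ) ∧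
          f = X p * X q - X p' * X q'} := by
  subst hφ
  apply le_antisymm
  · intro f hf
    rw [RingHom.mem_ker] at hf
    exact ker_le_span K he₁ he₂ f.support.card f le_rfl hf
  · rw [Ideal.span_le]
    intro f hfg
    rw [SetLike.mem_coe, RingHom.mem_ker]
    exact gens_subset_ker K f hfg
end

section
/- Let S ⊆ ℤ² be a finite set whose convex hull P = conv(S) ⊆ ℝ² has nonempty interior (i.e., P is a two-dimensional lattice polygon). Then the interior of the dilate 3•P = {3·p : p ∈ P} contains a point of ℤ². -/
open Pointwise

/-- **The triple dilate of a 2-dimensional lattice polygon has an interior lattice point.**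
If `S ⊆ ℤ²` is finite and its convex hull `P = conv(S) ⊆ ℝ²` has nonempty interior, then
the interior of `3 • P` contains a point of `ℤ²`. -/
theorem interior_lattice_point_of_triple_dilate (S : Finset (ℤ × ℤ))
    (P : Set (ℝ × ℝ))
    (hP : P = convexHull ℝ ((fun z : ℤ × ℤ => ((z.1 : ℝ), (z.2 : ℝ))) '' (S : Set (ℤ × ℤ))))
    (hint : (interior P).Nonempty) :
    ∃ z : ℤ × ℤ, ((z.1 : ℝ), (z.2 : ℝ)) ∈ interior ((3 : ℝ) • P) := by
  classical
  set f : ℤ × ℤ → ℝ × ℝ := fun z => ((z.1 : ℝ), (z.2 : ℝ)) with hf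
  set A : Set (ℝ × ℝ) := f '' (S : Set (ℤ × ℤ)) with hA
  -- the affine span of A is everything
  have htop : affineSpan ℝ A = ⊤ :=
    affineSpan_eq_top_of_nonempty_interior (by rwa [← hP])
  obtain ⟨t, hts, htspan, hti⟩ := exists_affineIndependent ℝ (ℝ × ℝ) A
  rw [htop] at htspan
  have htfin : t.Finite := finite_set_of_fin_dim_affineIndependent ℝ hti
  haveI : Fintype t := htfin.fintype
  have hrange : Set.range ((↑) : t → ℝ × ℝ) = t := Subtype.range_coe
  have htspan' : affineSpan ℝ (Set.range ((↑) : t → ℝ × ℝ)) = ⊤ := by rwa [hrange]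
  let b : AffineBasis t ℝ (ℝ × ℝ) := ⟨((↑) : t → ℝ × ℝ), hti, htspan'⟩
  have hcard : Fintype.card t = 3 := by
    have h := hti.affineSpan_eq_top_iff_card_eq_finrank_add_one.mp htspan'
    simpa using h
  -- the centroid of the basis
  set x : ℝ × ℝ := Finset.univ.centroid ℝ ((↑) : t → ℝ × ℝ) with hx
  have hxint : x ∈ interior P := by
    have h1 : x ∈ interior (convexHull ℝ (Set.range b)) :=
      b.centroid_mem_interior_convexHull
    have h2 : Set.range b = t := hrange
    have h3 : convexHull ℝ t ⊆ P := by
      rw [hP]; exact convexHull_mono hts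
    exact interior_mono h3 (by rwa [h2] at h1)
  -- 3 • x is the sum of the three vertices
  have hsum : (3 : ℝ) • x = ∑ i : t, (i : ℝ × ℝ) := by
    rw [hx, Finset.centroid_def, Finset.affineCombination_eq_linear_combination _ _ _
      (Finset.sum_centroidWeights_eq_one_of_card_ne_zero (k := ℝ) (s := (Finset.univ : Finset t))
      (by simp [Finset.card_univ, hcard]))]
    simp only [Finset.centroidWeights_apply, Finset.card_univ, hcard]
    rw [← Finset.smul_sum, smul_smul]
    norm_num
  -- choose lattice preimages
  have hchoice : ∀ i : t, ∃ z : ℤ × ℤ, f z = (i : ℝ × ℝ) := by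
    intro i
    obtain ⟨z, _, hz⟩ := hts i.2
    exact ⟨z, hz⟩
  choose g hg using hchoice
  refine ⟨∑ i : t, g i, ?_⟩
  have hfz : f (∑ i : t, g i) = (3 : ℝ) • x := by
    have : f (∑ i : t, g i) = ∑ i : t, f (g i) := by
      exact map_sum ((AddMonoidHom.prodMap (Int.castAddHom ℝ) (Int.castAddHom ℝ))) g
        Finset.univ
    rw [this, hsum]
    exact Finset.sum_congr rfl fun i _ => hg i
  have : f (∑ i : t, g i) ∈ interior ((3 : ℝ) • P) := by
    rw [interior_smul₀ (by norm_num : (3 : ℝ) ≠ 0)]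
    rw [hfz]
    exact Set.smul_mem_smul_set hxint
  exact this
end
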